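/- arXiv:1604.07393 — 3 statements merged into one kernel-verified Lean document; each statement's English description precedes it below -/
import Mathlib

section
/- A pseudo-resolvent R on a nonempty regular set in a unital Banach algebra 𝓑 is the resolvent of some element A ∈ 𝓑 (i.e. R_λ = (λ·1 − A)⁻¹ for all λ in the regular set) if and only if R_μ is invertible for at least one μ in the regular set; in that case A = λ·1 − (R_λ)⁻¹ for every λ in the regular set. -/
/-- A pseudo-resolvent `R` on a nonempty set `U` in a unital Banach algebra is the resolvent
of an element `A` iff some value `R μ` is invertible; in that case
`A = λ·1 − (R λ)⁻¹` for every `λ ∈ U`. -/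
theorem pseudoResolvent_is_resolvent_iff {𝓑 : Type*} [NormedRing 𝓑] [NormedAlgebra ℂ 𝓑]
    [CompleteSpace 𝓑] (U : Set ℂ) (hU : U.Nonempty) (R : ℂ → 𝓑)
    (hH : ∀ lam ∈ U, ∀ mu ∈ U, R lam - R mu = -((lam - mu) • (R lam * R mu))) :
    ((∃ A : 𝓑, ∀ lam ∈ U,
        (lam • (1 : 𝓑) - A) * R lam = 1 ∧ R lam * (lam • (1 : 𝓑) - A) = 1) ↔
      ∃ mu ∈ U, IsUnit (R mu)) ∧
    ∀ A : 𝓑, (∀ lam ∈ U,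
        (lam • (1 : 𝓑) - A) * R lam = 1 ∧ R lam * (lam • (1 : 𝓑) - A) = 1) →
      ∀ lam ∈ U, A = lam • (1 : 𝓑) - Ring.inverse (R lam) := by
  -- values of R commute
  have comm : ∀ lam ∈ U, ∀ mu ∈ U, R lam * R mu = R mu * R lam := by
    intro lam hlam mu hmu
    rcases eq_or_ne lam mu with rfl | hne
    · rfl
    · have h1 := hH lam hlam mu hmu
      have h2 := hH mu hmu lam hlam
      have h1' : R mu - R lam = (lam - mu) • (R lam * R mu) := by
        have := congrArg Neg.neg h1
        simpa [neg_sub] using this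
      rw [show mu - lam = -(lam - mu) by ring, neg_smul, neg_neg] at h2
      have h3 := congrArg (fun x => (lam - mu)⁻¹ • x) (h1'.symm.trans h2)
      simpa [smul_smul, inv_mul_cancel₀ (sub_ne_zero.mpr hne)] using h3
  have key : ∀ mu ∈ U, IsUnit (R mu) → ∀ lam ∈ U,
      (lam • (1 : 𝓑) - (mu • (1 : 𝓑) - Ring.inverse (R mu))) * R lam = 1 ∧
      R lam * (lam • (1 : 𝓑) - (mu • (1 : 𝓑) - Ring.inverse (R mu))) = 1 := by
    intro mu hmu hu lam hlam
    set B := Ring.inverse (R mu) with hB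
    have hB1 : R mu * B = 1 := Ring.mul_inverse_cancel (R mu) hu
    have hB2 : B * R mu = 1 := Ring.inverse_mul_cancel (R mu) hu
    have hc : B * R lam = R lam * B := by
      calc B * R lam = B * R lam * (R mu * B) := by rw [hB1, mul_one]
        _ = B * (R lam * R mu) * B := by simp [mul_assoc]
        _ = B * (R mu * R lam) * B := by rw [comm lam hlam mu hmu]
        _ = (B * R mu) * (R lam * B) := by simp [mul_assoc]
        _ = R lam * B := by rw [hB2, one_mul]
    have hRB : R lam * B = 1 - (lam - mu) • R lam := by
      have h1 := hH lam hlam mu hmu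
      have h := congrArg (· * B) h1
      simp only [sub_mul, smul_mul_assoc, neg_mul, mul_assoc, hB1, mul_one] at h
      rw [sub_eq_iff_eq_add] at h
      rw [h, sub_smul]
      abel
    constructor
    · have expand : (lam • (1 : 𝓑) - (mu • (1 : 𝓑) - B)) * R lam
          = lam • R lam - mu • R lam + B * R lam := by
        simp only [sub_mul, smul_mul_assoc, one_mul]
        abel
      rw [expand, hc, hRB, sub_smul]
      abel
    · have expand : R lam * (lam • (1 : 𝓑) - (mu • (1 : 𝓑) - B))
          = lam • R lam - mu • R lam + R lam * B := by
        simp only [mul_sub, mul_smul_comm, mul_one]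
        abel
      rw [expand, hRB, sub_smul]
      abel
  constructor
  · constructor
    · rintro ⟨A, hA⟩
      obtain ⟨mu, hmu⟩ := hU
      exact ⟨mu, hmu, ⟨⟨R mu, mu • (1 : 𝓑) - A, (hA mu hmu).2, (hA mu hmu).1⟩, rfl⟩⟩
    · rintro ⟨mu, hmu, hu⟩
      exact ⟨mu • (1 : 𝓑) - Ring.inverse (R mu), key mu hmu hu⟩
  · intro A hA lam hlam
    have h := hA lam hlam
    have hu : IsUnit (R lam) := ⟨⟨R lam, lam • (1 : 𝓑) - A, h.2, h.1⟩, rfl⟩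
    have hinv : Ring.inverse (R lam) = lam • (1 : 𝓑) - A := by
      have hmc := Ring.mul_inverse_cancel (R lam) hu
      calc Ring.inverse (R lam)
          = ((lam • (1 : 𝓑) - A) * R lam) * Ring.inverse (R lam) := by rw [h.1, one_mul]
        _ = (lam • (1 : 𝓑) - A) * (R lam * Ring.inverse (R lam)) := by rw [mul_assoc]
        _ = lam • (1 : 𝓑) - A := by rw [hmc, mul_one]
    rw [hinv]
    abel
end

section
/- Let X, Y be Banach spaces, A : X → X and B : Y → Y bounded linear operators whose spectra are disjoint. Then the Sylvester equation AZ − ZB = C has a unique bounded solution Z : Y → X for every bounded C : Y → X. -/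
open ContinuousLinearMap

/-- The centralizer of a set in a normed ring is closed. -/
lemma sylvester_isClosed_centralizer {M : Type*} [NormedRing M] (s : Set M) :
    IsClosed (Set.centralizer s) := by
  have h : Set.centralizer s = ⋂ m ∈ s, {x | m * x = x * m} := by
    ext x; simp [Set.mem_centralizer_iff]
  rw [h]
  exact isClosed_biInter fun m _ =>
    isClosed_eq (continuous_const.mul continuous_id) (continuous_id.mul continuous_const)

/-- If `g` is a unit with inverse `w`, and `x` commutes with `g`, then `x` commutes with `w`. -/
lemma sylvester_comm_inv {M : Type*} [Ring M] {g w x : M} (h1 : g * w = 1) (h2 : w * g = 1)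
    (hx : g * x = x * g) : w * x = x * w := by
  calc w * x = w * (x * (g * w)) := by rw [h1, mul_one]
    _ = w * (x * g) * w := by rw [← mul_assoc, ← mul_assoc, ← mul_assoc]
    _ = w * (g * x) * w := by rw [hx]
    _ = (w * g) * (x * w) := by rw [← mul_assoc, mul_assoc (w * g)]
    _ = x * w := by rw [h2, one_mul]

/-- **Rosenblum's theorem** (abstract form): if `a` and `b` are commuting elements of a complex
Banach algebra with disjoint spectra, then `a - b` is a unit. -/
lemma sylvester_commuting_sub_isUnit {M : Type*} [NormedRing M] [NormedAlgebra ℂ M]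
    [CompleteSpace M] (a b : M) (hab : a * b = b * a)
    (hdisj : ∀ μ : ℂ, μ ∈ spectrum ℂ a → μ ∈ spectrum ℂ b → False) :
    IsUnit (a - b) := by
  classical
  set s : Set M := Set.centralizer {a, b} with hsdef
  set S : Subalgebra ℂ M := Subalgebra.centralizer ℂ s with hSdef
  have has : a ∈ s := by
    intro m hm
    rcases hm with h | h
    · rw [h]
    · rw [Set.mem_singleton_iff] at h; rw [h]; exact hab.symm
  have hbs : b ∈ s := by
    intro m hm
    rcases hm with h | h
    · rw [h]; exact hab
    · rw [Set.mem_singleton_iff] at h; rw [h]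
  have haS : a ∈ S := fun g hg => (hg a (Or.inl rfl)).symm
  have hbS : b ∈ S := fun g hg => (hg b (Or.inr rfl)).symm
  have hSs : (S : Set M) ⊆ s := by
    intro x hx m hm
    rcases hm with h | h
    · rw [h]; exact hx a has
    · rw [Set.mem_singleton_iff] at h; rw [h]; exact hx b hbs
  have hScomm : ∀ x y : S, x * y = y * x := by
    rintro ⟨x, hx⟩ ⟨y, hy⟩
    exact Subtype.ext ((hx y (hSs hy)).symm)
  have hclosed : IsClosed (S : Set M) := by
    rw [hSdef, Subalgebra.coe_centralizer]
    exact sylvester_isClosed_centralizer s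
  letI : CompleteSpace S := hclosed.completeSpace_coe
  letI : NormedCommRing S := { (inferInstance : NormedRing S) with mul_comm := hScomm }
  -- S is inverse-closed
  have hinv : ∀ g w : M, g ∈ S → g * w = 1 → w * g = 1 → w ∈ S := by
    intro g w hg h1 h2 x hx
    exact (sylvester_comm_inv h1 h2 ((hg x hx).symm)).symm
  set τ : S := ⟨a, haS⟩ - ⟨b, hbS⟩ with hτdef
  have hτ : IsUnit τ := by
    by_contra hτn
    obtain ⟨φ, hφ⟩ := WeakDual.CharacterSpace.exists_apply_eq_zero hτn
    set μ : ℂ := φ ⟨a, haS⟩ with hμdef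
    have hφb : φ ⟨b, hbS⟩ = μ := by
      have h0 : φ ⟨a, haS⟩ - φ ⟨b, hbS⟩ = 0 := by
        rw [← map_sub, ← hτdef, hφ]
      exact (sub_eq_zero.mp h0).symm
    have hchar : ∀ t : S, IsUnit t → φ t ≠ 0 := by
      intro t ht h0
      obtain ⟨u, hu⟩ := ht
      have h1 : φ (t * ↑u⁻¹) = 0 := by rw [map_mul, h0, zero_mul]
      rw [← hu, u.mul_inv, map_one] at h1
      exact one_ne_zero h1
    have key : ∀ c : M, ∀ hc : c ∈ S, φ ⟨c, hc⟩ = μ → μ ∈ spectrum ℂ c := by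
      intro c hc hφc
      by_contra hcs
      rw [spectrum.notMem_iff] at hcs
      obtain ⟨u, hu⟩ := hcs
      have h1 : (algebraMap ℂ M μ - c) * ↑u⁻¹ = 1 := by rw [← hu]; exact u.mul_inv
      have h2 : (↑u⁻¹ : M) * (algebraMap ℂ M μ - c) = 1 := by rw [← hu]; exact u.inv_mul
      have hgS : algebraMap ℂ M μ - c ∈ S := sub_mem (S.algebraMap_mem μ) hc
      have hwS : (↑u⁻¹ : M) ∈ S := hinv _ _ hgS h1 h2
      have hunit : IsUnit ((algebraMap ℂ S μ) - (⟨c, hc⟩ : S)) := by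
        refine isUnit_iff_exists.mpr ⟨⟨↑u⁻¹, hwS⟩, Subtype.ext ?_, Subtype.ext ?_⟩
        · simpa using h1
        · simpa using h2
      apply hchar _ hunit
      rw [map_sub, AlgHomClass.commutes, hφc]
      simp
    exact hdisj μ (key a haS hμdef.symm) (key b hbS hφb)
  have := hτ.map S.val
  simpa [hτdef] using this

set_option maxHeartbeats 1000000 in
set_option synthInstance.maxHeartbeats 400000 in
/-- If the spectra of bounded operators `A ∈ B(X)` and `B ∈ B(Y)` are disjoint, then the
Sylvester equation `AZ − ZB = C` has a unique bounded solution `Z` for every `C`. -/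
theorem sylvester_equation_unique_solution {X Y : Type*}
    [NormedAddCommGroup X] [NormedSpace ℂ X] [CompleteSpace X]
    [NormedAddCommGroup Y] [NormedSpace ℂ Y] [CompleteSpace Y]
    (A : X →L[ℂ] X) (B : Y →L[ℂ] Y)
    (hdisj : Disjoint (spectrum ℂ A) (spectrum ℂ B)) :
    ∀ C : Y →L[ℂ] X, ∃! Z : Y →L[ℂ] X, A.comp Z - Z.comp B = C := by
  classical
  set L : (Y →L[ℂ] X) →L[ℂ] (Y →L[ℂ] X) := compL ℂ Y X X A with hLdef
  set R : (Y →L[ℂ] X) →L[ℂ] (Y →L[ℂ] X) := (compL ℂ Y Y X).flip B with hRdef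
  have hLapp : ∀ Z : Y →L[ℂ] X, L Z = A.comp Z := fun Z => rfl
  have hRapp : ∀ Z : Y →L[ℂ] X, R Z = Z.comp B := fun Z => rfl
  have hLR : L * R = R * L := by ext Z y; rfl
  -- spectrum of L is contained in that of A
  have hLA : spectrum ℂ L ⊆ spectrum ℂ A := by
    intro μ hμ
    by_contra hA
    rw [spectrum.notMem_iff] at hA
    obtain ⟨u, hu⟩ := hA
    apply spectrum.notMem_iff.mpr _ hμ
    set g : X →L[ℂ] X := algebraMap ℂ (X →L[ℂ] X) μ - A with hgdef
    have h1 : g * ↑u⁻¹ = 1 := by rw [← hu]; exact u.mul_inv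
    have h2 : (↑u⁻¹ : X →L[ℂ] X) * g = 1 := by rw [← hu]; exact u.inv_mul
    have hbig : algebraMap ℂ ((Y →L[ℂ] X) →L[ℂ] (Y →L[ℂ] X)) μ - L
        = compL ℂ Y X X g := by
      ext Z y
      simp [hgdef, hLapp, Algebra.algebraMap_eq_smul_one, sub_comp]
    refine ⟨⟨algebraMap ℂ _ μ - L, compL ℂ Y X X (↑u⁻¹), ?_, ?_⟩, rfl⟩
    · rw [hbig]
      ext Z y
      have h := congrFun (congrArg DFunLike.coe
        (show (g * (↑u⁻¹ : X →L[ℂ] X)).comp Z = Z by rw [h1]; rfl)) y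
      simpa [mul_apply', compL_apply, mul_def, comp_assoc] using h
    · rw [hbig]
      ext Z y
      have h := congrFun (congrArg DFunLike.coe
        (show ((↑u⁻¹ : X →L[ℂ] X) * g).comp Z = Z by rw [h2]; rfl)) y
      simpa [mul_apply', compL_apply, mul_def, comp_assoc] using h
  -- spectrum of R is contained in that of B
  have hRB : spectrum ℂ R ⊆ spectrum ℂ B := by
    intro μ hμ
    by_contra hB
    rw [spectrum.notMem_iff] at hB
    obtain ⟨u, hu⟩ := hB
    apply spectrum.notMem_iff.mpr _ hμ
    set g : Y →L[ℂ] Y := algebraMap ℂ (Y →L[ℂ] Y) μ - B with hgdef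
    have h1 : g * ↑u⁻¹ = 1 := by rw [← hu]; exact u.mul_inv
    have h2 : (↑u⁻¹ : Y →L[ℂ] Y) * g = 1 := by rw [← hu]; exact u.inv_mul
    have hbig : algebraMap ℂ ((Y →L[ℂ] X) →L[ℂ] (Y →L[ℂ] X)) μ - R
        = (compL ℂ Y Y X).flip g := by
      ext Z y
      simp [hgdef, hRapp, Algebra.algebraMap_eq_smul_one, comp_sub]
    refine ⟨⟨algebraMap ℂ _ μ - R, (compL ℂ Y Y X).flip (↑u⁻¹), ?_, ?_⟩, rfl⟩
    · rw [hbig]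
      ext Z y
      have h := congrFun (congrArg DFunLike.coe
        (show Z.comp ((↑u⁻¹ : Y →L[ℂ] Y) * g) = Z by rw [h2]; rfl)) y
      simpa [mul_apply', compL_apply, mul_def, comp_assoc] using h
    · rw [hbig]
      ext Z y
      have h := congrFun (congrArg DFunLike.coe
        (show Z.comp (g * (↑u⁻¹ : Y →L[ℂ] Y)) = Z by rw [h1]; rfl)) y
      simpa [mul_apply', compL_apply, mul_def, comp_assoc] using h
  -- apply the abstract theorem
  have hτ : IsUnit (L - R) :=
    sylvester_commuting_sub_isUnit L R hLR fun μ hL hR =>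
      Set.disjoint_left.mp hdisj (hLA hL) (hRB hR)
  obtain ⟨u, hu⟩ := hτ
  intro C
  refine ⟨(↑u⁻¹ : (Y →L[ℂ] X) →L[ℂ] (Y →L[ℂ] X)) C, ?_, ?_⟩
  · have h1 : (L - R) ((↑u⁻¹ : (Y →L[ℂ] X) →L[ℂ] (Y →L[ℂ] X)) C) = C := by
      have h := congrFun (congrArg DFunLike.coe u.mul_inv) C
      rw [hu] at h
      simpa [mul_apply'] using h
    show A.comp _ - ContinuousLinearMap.comp _ B = C
    rw [← hLapp, ← hRapp, ← ContinuousLinearMap.sub_apply]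
    exact h1
  · intro Z hZ
    have hZ' : (L - R) Z = C := by
      rw [ContinuousLinearMap.sub_apply, hLapp, hRapp]; exact hZ
    have h := congrFun (congrArg DFunLike.coe u.inv_mul) Z
    rw [hu] at h
    calc Z = (↑u⁻¹ : (Y →L[ℂ] X) →L[ℂ] (Y →L[ℂ] X)) ((L - R) Z) := by
          simpa [mul_apply'] using h.symm
      _ = (↑u⁻¹ : (Y →L[ℂ] X) →L[ℂ] (Y →L[ℂ] X)) C := by rw [hZ']
end

section
/- Let X be a Banach space, A ∈ B(X), and f analytic on an open neighbourhood of σ(A). Then the map T ↦ f(T) (holomorphic functional calculus) is Fréchet differentiable at A, with differential ΔA ↦ (1/2πi) ∫_Γ f(λ)(λ−A)⁻¹ ΔA (λ−A)⁻¹ dλ, where Γ is a contour surrounding σ(A) inside the domain of f; i.e. f(A+ΔA) = f(A) + (1/2πi)∫_Γ f(λ)(λ−A)⁻¹ΔA(λ−A)⁻¹dλ + o(‖ΔA‖). -/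
/-!
The integrand `λ ↦ f(λ) (λ - T)⁻¹` depends on `T` only through the resolvent, whose derivative
in `T` is `ΔT ↦ (λ - T)⁻¹ ΔT (λ - T)⁻¹`. Since the circle is compact and lies in the resolvent
set of `A`, it stays in the resolvent set of every `T` near `A`, with a uniform bound on the
resolvent there. This bound dominates the derivative of the integrand, so one may
differentiate under the integral sign.
-/

open Metric Filter Topology MeasureTheory Real Complex ContinuousLinearMap

section Resolvent

variable {𝕜 A : Type*} [NontriviallyNormedField 𝕜] [NormedRing A] [NormedAlgebra 𝕜 A]

theorem resolvent_eq_ringInverse_smul_one_sub (a : A) (z : 𝕜) :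
    resolvent a z = Ring.inverse (z • 1 - a) := by
  rw [resolvent, Algebra.algebraMap_eq_smul_one]

variable [CompleteSpace A]

theorem continuousOn_resolvent (a : A) : ContinuousOn (resolvent a) (resolventSet 𝕜 a) :=
  fun _ hz => (spectrum.hasDerivAt_resolvent_const_left hz).continuousAt.continuousWithinAt

theorem IsCompact.eventually_forall_mem_resolventSet_norm_resolvent_lt {K : Set 𝕜}
    (hK : IsCompact K) {a : A} (hKa : K ⊆ resolventSet 𝕜 a) :
    ∃ M, ∀ᶠ b in 𝓝 a, ∀ z ∈ K, z ∈ resolventSet 𝕜 b ∧ ‖resolvent b z‖ < M := by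
  obtain ⟨M, hM⟩ := hK.exists_bound_of_continuousOn ((continuousOn_resolvent a).mono hKa)
  refine ⟨M + 1, hK.eventually_forall_of_forall_eventually fun z hz => ?_⟩
  have hunit : IsUnit (algebraMap 𝕜 A z - a) := hKa hz
  have hcont : Continuous fun p : A × 𝕜 => algebraMap 𝕜 A p.2 - p.1 := by fun_prop
  have hres : ContinuousAt (fun p : A × 𝕜 => resolvent p.1 p.2) (a, z) := by
    have hinv := NormedRing.inverse_continuousAt hunit.unit
    rw [hunit.unit_spec] at hinv
    exact hinv.comp (x := (a, z)) hcont.continuousAt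
  filter_upwards [hcont.continuousAt.preimage_mem_nhds (Units.isOpen.mem_nhds hunit),
    hres.norm.eventually (gt_mem_nhds ((hM z hz).trans_lt (lt_add_one M)))] with p hp hpM
  exact ⟨hp, hpM⟩

theorem continuousOn_mulLeftRight_resolvent (a : A) :
    ContinuousOn (fun z => mulLeftRight 𝕜 A (resolvent a z) (resolvent a z))
      (resolventSet 𝕜 a) :=
  (mulLeftRight 𝕜 A).continuous₂.comp_continuousOn
    (f := fun z => (resolvent a z, resolvent a z))
    ((continuousOn_resolvent a).prodMk (continuousOn_resolvent a))

end Resolvent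

section CircleIntegral

variable {E H : Type*} [NormedAddCommGroup E] [NormedSpace ℂ E] [NormedAddCommGroup H]
  [NormedSpace ℂ H]

theorem ContinuousLinearMap.circleIntegral_apply {φ : ℂ → H →L[ℂ] E} {c : ℂ} {R : ℝ}
    (hφ : CircleIntegrable φ c R) (v : H) :
    (∮ z in C(c, R), φ z) v = ∮ z in C(c, R), φ z v := by
  simp only [circleIntegral, ContinuousLinearMap.intervalIntegral_apply hφ.out,
    smul_apply]

theorem hasFDerivAt_circleIntegral_of_dominated {F : H → ℂ → E} {F' : H → ℂ → H →L[ℂ] E}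
    {x₀ : H} {s : Set H} {c : ℂ} {R C : ℝ} (hs : s ∈ 𝓝 x₀)
    (hF_int : ∀ x ∈ s, CircleIntegrable (F x) c R) (hF'_int : CircleIntegrable (F' x₀) c R)
    (h_bound : ∀ x ∈ s, ∀ z ∈ sphere c |R|, ‖F' x z‖ ≤ C)
    (h_diff : ∀ x ∈ s, ∀ z ∈ sphere c |R|, HasFDerivAt (F · z) (F' x z) x) :
    HasFDerivAt (fun x => ∮ z in C(c, R), F x z) (∮ z in C(c, R), F' x₀ z) x₀ := by
  refine intervalIntegral.hasFDerivAt_integral_of_dominated_of_fderiv_le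
    (F' := fun x θ => deriv (circleMap c R) θ • F' x (circleMap c R θ))
    (bound := fun _ => |R| * C) hs
    (eventually_of_mem hs fun x hx => (hF_int x hx).out.aestronglyMeasurable_restrict_uIoc)
    (hF_int x₀ (mem_of_mem_nhds hs)).out hF'_int.out.aestronglyMeasurable_restrict_uIoc
    (ae_of_all _ fun θ _ x hx => ?_) intervalIntegrable_const
    (ae_of_all _ fun θ _ x hx => (h_diff x hx _ (circleMap_mem_sphere' c R θ)).const_smul _)
  rw [norm_smul, deriv_circleMap, norm_mul, norm_circleMap_zero, norm_I, mul_one]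
  exact mul_le_mul_of_nonneg_left (h_bound x hx _ (circleMap_mem_sphere' c R θ)) (abs_nonneg R)

end CircleIntegral

section BanachAlgebra

variable {A : Type*} [NormedRing A] [NormedAlgebra ℂ A] [CompleteSpace A]

theorem hasFDerivAt_circleIntegral_smul_resolvent {g : ℂ → ℂ} {a : A} {c : ℂ} {R : ℝ}
    (hg : ContinuousOn g (sphere c |R|)) (ha : sphere c |R| ⊆ resolventSet ℂ a) :
    HasFDerivAt (fun b => ∮ z in C(c, R), g z • resolvent b z)
      (∮ z in C(c, R), g z • mulLeftRight ℂ A (resolvent a z) (resolvent a z)) a := by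
  obtain ⟨Cg, hCg⟩ := (isCompact_sphere c |R|).exists_bound_of_continuousOn hg
  obtain ⟨M, hM⟩ :=
    (isCompact_sphere c |R|).eventually_forall_mem_resolventSet_norm_resolvent_lt ha
  refine hasFDerivAt_circleIntegral_of_dominated
    (F' := fun b z => g z • mulLeftRight ℂ A (resolvent b z) (resolvent b z))
    (C := Cg * (M * M)) hM
    (fun b hb => (hg.fun_smul ((continuousOn_resolvent b).mono
      fun z hz => (hb z hz).1)).circleIntegrable')
    (hg.fun_smul ((continuousOn_mulLeftRight_resolvent a).mono ha)).circleIntegrable'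
    (fun b hb z hz => ?_)
    (fun b hb z hz => (spectrum.hasFDerivAt_resolvent (hb z hz).1).fun_const_smul _)
  calc ‖g z • mulLeftRight ℂ A (resolvent b z) (resolvent b z)‖
      ≤ ‖g z‖ * (‖resolvent b z‖ * ‖resolvent b z‖) :=
        (norm_smul_le (g z) (mulLeftRight ℂ A (resolvent b z) (resolvent b z))).trans
          (mul_le_mul_of_nonneg_left (opNorm_mulLeftRight_apply_apply_le _ _ _ _) (norm_nonneg _))
    _ ≤ Cg * (M * M) :=
        mul_le_mul (hCg z hz) (mul_self_le_mul_self (norm_nonneg _) (hb z hz).2.le)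
          (by positivity) ((norm_nonneg _).trans (hCg z hz))

end BanachAlgebra

theorem holomorphicFunctionalCalculus_hasFDerivAt_general {X : Type*}
    [NormedAddCommGroup X] [NormedSpace ℂ X] [CompleteSpace X]
    (A : X →L[ℂ] X) (f : ℂ → ℂ) (U : Set ℂ)
    (hf : AnalyticOnNhd ℂ f U) (c : ℂ) (R : ℝ) (hR : 0 < R)
    (hΓ : Metric.closedBall c R ⊆ U) (hspec : spectrum ℂ A ⊆ Metric.ball c R) :
    ∃ L : (X →L[ℂ] X) →L[ℂ] (X →L[ℂ] X),
      (∀ ΔA : X →L[ℂ] X,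
        L ΔA = (2 * Real.pi * Complex.I)⁻¹ •
          circleIntegral (fun z => f z •
            (Ring.inverse (z • (1 : X →L[ℂ] X) - A) * ΔA *
              Ring.inverse (z • (1 : X →L[ℂ] X) - A))) c R) ∧
      HasFDerivAt (fun T : X →L[ℂ] X =>
          (2 * Real.pi * Complex.I)⁻¹ •
            circleIntegral (fun z => f z • Ring.inverse (z • (1 : X →L[ℂ] X) - T)) c R)
        L A := by
  simp only [← resolvent_eq_ringInverse_smul_one_sub]
  rw [← abs_of_pos hR] at hΓ hspec
  have hsphere : sphere c |R| ⊆ resolventSet ℂ A := fun z hz =>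
    spectrum.notMem_iff.1 fun hzσ => (mem_ball.1 (hspec hzσ)).ne (mem_sphere.1 hz)
  have hf_cont : ContinuousOn f (sphere c |R|) :=
    hf.continuousOn.mono (sphere_subset_closedBall.trans hΓ)
  refine ⟨(2 * π * I)⁻¹ • ∮ z in C(c, R), f z • mulLeftRight ℂ _ (resolvent A z) (resolvent A z),
    fun ΔA => ?_, (hasFDerivAt_circleIntegral_smul_resolvent hf_cont hsphere).fun_const_smul _⟩
  rw [smul_apply, circleIntegral_apply
    (hf_cont.fun_smul ((continuousOn_mulLeftRight_resolvent A).mono hsphere)).circleIntegrable']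
  simp only [smul_apply, mulLeftRight_apply]

/-- The holomorphic functional calculus `T ↦ f(T)` (defined by the Cauchy integral over a
circle `Γ = C(c,R)` enclosing `σ(A)` inside the domain of `f`) is Fréchet differentiable at
`A`, with differential `ΔA ↦ (2πi)⁻¹ ∮_Γ f(λ)(λ−A)⁻¹ ΔA (λ−A)⁻¹ dλ`. -/
theorem holomorphicFunctionalCalculus_hasFDerivAt {X : Type*}
    [NormedAddCommGroup X] [NormedSpace ℂ X] [CompleteSpace X]
    (A : X →L[ℂ] X) (f : ℂ → ℂ) (U : Set ℂ) (hU : IsOpen U)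
    (hf : AnalyticOnNhd ℂ f U) (c : ℂ) (R : ℝ) (hR : 0 < R)
    (hΓ : Metric.closedBall c R ⊆ U) (hspec : spectrum ℂ A ⊆ Metric.ball c R) :
    ∃ L : (X →L[ℂ] X) →L[ℂ] (X →L[ℂ] X),
      (∀ ΔA : X →L[ℂ] X,
        L ΔA = (2 * Real.pi * Complex.I)⁻¹ •
          circleIntegral (fun z => f z •
            (Ring.inverse (z • (1 : X →L[ℂ] X) - A) * ΔA *
              Ring.inverse (z • (1 : X →L[ℂ] X) - A))) c R) ∧
      HasFDerivAt (fun T : X →L[ℂ] X =>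
          (2 * Real.pi * Complex.I)⁻¹ •
            circleIntegral (fun z => f z • Ring.inverse (z • (1 : X →L[ℂ] X) - T)) c R)
        L A :=
  holomorphicFunctionalCalculus_hasFDerivAt_general A f U hf c R hR hΓ hspec
end
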